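/- Let (W,S) be a Coxeter system, H its Hecke algebra over ℚ(u), M an H-module, and X a linearly independent subset of M. Then X supports a W-digraph if and only if for each s ∈ S there exists a partition P_s of X such that every block U ∈ P_s has the form U = {α, β} with α ≠ β and either T_sα = β or T_s°α = β. -/

import Mathlib

open Finsupp

set_option synthInstance.maxHeartbeats 1000000
set_option maxHeartbeats 1000000

noncomputable section

/-- The field `ℚ(u)` of rational functions. -/
abbrev Kq : Type := RatFunc ℚ

/-- The indeterminate `u`. -/
def uu : Kq := RatFunc.X

/-- An `S`-labeled digraph on vertex type `V` with labels in `B`: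
`Edge a b s d` means there is an edge from `a` to `b` labeled `s`, which is
dashed if `d = true` and solid if `d = false`.  There are no loops, and every
vertex occurs in exactly one edge with any given label. -/
structure SLabeledDigraph (V B : Type*) where
  Edge : V → V → B → Bool → Prop
  no_loop : ∀ v s d, ¬ Edge v v s d
  unique_edge : ∀ v s, ∃! e : V × V × Bool,
    (e.1 = v ∨ e.2.1 = v) ∧ Edge e.1 e.2.1 s e.2.2

namespace SLabeledDigraph

variable {V B : Type*} (Γ : SLabeledDigraph V B)

/-- Swap the endpoints of an edge datum. -/
def eswap {V : Type*} (e : V × V × Bool) : V × V × Bool := (e.2.1, e.1, e.2.2)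

/-- The reversed digraph `Γ_rev`, with all edge directions reversed but types
and labels kept. -/
def rev : SLabeledDigraph V B where
  Edge a b s d := Γ.Edge b a s d
  no_loop v s d := Γ.no_loop v s d
  unique_edge v s := by
    obtain ⟨e, ⟨hinc, hedge⟩, huniq⟩ := Γ.unique_edge v s
    refine ⟨eswap e, ⟨Or.symm hinc, hedge⟩, ?_⟩
    rintro e' ⟨hinc', hedge'⟩
    have h1 : eswap e' = e := huniq (eswap e') ⟨Or.symm hinc', hedge'⟩
    calc e' = eswap (eswap e') := rfl
    _ = eswap e := by rw [h1]

/-- The restriction `Γ_J`: same vertices, only edges with labels in `J`. -/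
def restrict (J : Set B) : SLabeledDigraph V J where
  Edge a b s d := Γ.Edge a b s.1 d
  no_loop v s d := Γ.no_loop v s.1 d
  unique_edge v s := Γ.unique_edge v s.1

/-- Directed adjacency (ignoring labels and edge types). -/
def DAdj (a b : V) : Prop := ∃ s d, Γ.Edge a b s d

/-- Undirected adjacency. -/
def UAdj (a b : V) : Prop := Γ.DAdj a b ∨ Γ.DAdj b a

/-- `Γ` is connected if any two vertices are joined by an undirected path. -/
def Connected : Prop := ∀ a b : V, Relation.ReflTransGen Γ.UAdj a b

/-- A source is a vertex at which no edge ends. -/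
def IsSource (a : V) : Prop := ∀ b s d, ¬ Γ.Edge b a s d

/-- A sink is a vertex at which no edge begins. -/
def IsSink (a : V) : Prop := ∀ b s d, ¬ Γ.Edge a b s d

/-- `Γ` is acyclic if it has no nonempty directed circuit. -/
def Acyclic : Prop := ∀ a : V, ¬ Relation.TransGen Γ.DAdj a a

/-- The setoid whose classes are the connected components of `Γ`. -/
def compSetoid : Setoid V :=
  ⟨Relation.ReflTransGen Γ.UAdj,
    ⟨fun _ => Relation.ReflTransGen.refl,
     fun h => by
       induction h with
       | refl => exact Relation.ReflTransGen.refl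
       | tail _ hbc ih => exact Relation.ReflTransGen.head (Or.symm hbc) ih,
     fun h1 h2 => Relation.ReflTransGen.trans h1 h2⟩⟩

end SLabeledDigraph

/-- The Hecke algebra of a Coxeter system over `ℚ(u)`: an associative
`ℚ(u)`-algebra `H` with basis `{T_w : w ∈ W}` such that `T_1 = 1` and
`T_s T_w = T_{sw}` if `ℓ(sw) > ℓ(w)`, while
`T_s T_w = u² T_{sw} + (u² - 1) T_w` if `ℓ(sw) < ℓ(w)`. -/
structure HeckeAlgebra {B W : Type*} [Group W] {M : CoxeterMatrix B}
    (cs : CoxeterSystem M W) (H : Type*) [Ring H] [Algebra Kq H] where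
  T : W → H
  basis : Module.Basis W Kq H
  basis_eq : ∀ w, basis w = T w
  T_one : T 1 = 1
  T_mul_of_lt : ∀ (i : B) (w : W), cs.length w < cs.length (cs.simple i * w) →
    T (cs.simple i) * T w = T (cs.simple i * w)
  T_mul_of_gt : ∀ (i : B) (w : W), cs.length (cs.simple i * w) < cs.length w →
    T (cs.simple i) * T w = (uu ^ 2) • T (cs.simple i * w) + (uu ^ 2 - 1) • T w

variable {B W : Type*} [Group W] {M : CoxeterMatrix B}
variable {H : Type*} [Ring H] [Algebra Kq H]

/-- `ρ` is the representation of `H` on `M(Γ)` (the `ℚ(u)`-vector space with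
basis the vertices of `Γ`) in which each `T_s` acts by the operator `τ_s`
determined by the edges of `Γ`. -/
def WDigraphRep {V : Type*} (cs : CoxeterSystem M W) (ha : HeckeAlgebra cs H)
    (Γ : SLabeledDigraph V B)
    (ρ : H →ₐ[Kq] Module.End Kq (V →₀ Kq)) : Prop :=
  ∀ (a b : V) (i : B),
    (Γ.Edge a b i false →
      ρ (ha.T (cs.simple i)) (single a (1 : Kq)) = single b (1 : Kq) ∧
      ρ (ha.T (cs.simple i)) (single b (1 : Kq))
        = (uu ^ 2 - 1) • single b (1 : Kq) + (uu ^ 2) • single a (1 : Kq)) ∧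
    (Γ.Edge a b i true →
      ρ (ha.T (cs.simple i)) (single a (1 : Kq)) = uu • single a (1 : Kq) + (uu + 1) • single b (1 : Kq) ∧
      ρ (ha.T (cs.simple i)) (single b (1 : Kq))
        = (uu ^ 2 - uu - 1) • single b (1 : Kq) + (uu ^ 2 - uu) • single a (1 : Kq))

/-- `Γ` is a `W`-digraph: the assignment `T_s ↦ τ_s` extends to a
representation of `H` on `M(Γ)`. -/
def IsWDigraph {V : Type*} (cs : CoxeterSystem M W) (ha : HeckeAlgebra cs H)
    (Γ : SLabeledDigraph V B) : Prop :=
  ∃ ρ : H →ₐ[Kq] Module.End Kq (V →₀ Kq), WDigraphRep cs ha Γ ρ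


/-- The element `T_s° = (u+1)⁻¹ (T_s - u)` of `H`, for `s = simple i`. -/
def Tcirc (cs : CoxeterSystem M W) (ha : HeckeAlgebra cs H) (i : B) : H :=
  (uu + 1)⁻¹ • (ha.T (cs.simple i) - uu • (1 : H))

/-- A subset `X` of the `H`-module given by `ρ` *supports a `W`-digraph* if it
is linearly independent and, for each `α ∈ X` and `s ∈ S`, at least one of
`T_s α`, `T_s⁻¹ α`, `T_s° α`, `(T_s°)⁻¹ α` lies in `X`. -/
def SupportsWDigraph {Mo : Type*} [AddCommGroup Mo] [Module Kq Mo]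
    (cs : CoxeterSystem M W) (ha : HeckeAlgebra cs H)
    (ρ : H →ₐ[Kq] Module.End Kq Mo) (X : Set Mo) : Prop :=
  LinearIndependent Kq (fun x : X => (x : Mo)) ∧
  ∀ α ∈ X, ∀ i : B,
    (ρ (ha.T (cs.simple i)) α ∈ X ∨
     ρ (Ring.inverse (ha.T (cs.simple i))) α ∈ X ∨
     ρ (Tcirc cs ha i) α ∈ X ∨
     ρ (Ring.inverse (Tcirc cs ha i)) α ∈ X)

/-!
`T_s` satisfies `T_s² = u² + (u² - 1) T_s`, so `T_s`, `T_s⁻¹`, `T_s°` and `(T_s°)⁻¹` all lie in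
the span of `1` and `T_s`, and each of them maps `α` into the span of `α` and `T_s α`. Since `X`
is linearly independent, this plane contains at most one element of `X` besides `α`; and none of
the four elements fixes a nonzero vector. Hence, if `X` supports a `W`-digraph, every `α ∈ X` is
paired with exactly one other element of `X`, and these pairs form the partition. Conversely, in
a block `{α, β}` with `β = T_s α` or `β = T_s° α`, also `α = T_s⁻¹ β` or `α = (T_s°)⁻¹ β`.
-/

section QuadraticElement

variable {K A : Type*} [Field K] [Ring A] [Algebra K A] {t : A} {a b : K}

theorem smul_sub_smul_one_mul_eq_one (ht : t * t = a • 1 + b • t) {p q r s : K}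
    (hrs : r + s = b) (hpq : p * q * (a + r * s) = 1) :
    p • (t - r • 1) * (q • (t - s • 1)) = 1 := by
  simp only [sub_mul, mul_sub, smul_mul_assoc, mul_smul_comm, one_mul, mul_one, ht]
  subst hrs
  linear_combination (norm := module) hpq • (1 : A)

theorem isUnit_smul_sub_smul_one (ht : t * t = a • 1 + b • t) {p q r s : K}
    (hrs : r + s = b) (hpq : p * q * (a + r * s) = 1) : IsUnit (p • (t - r • 1)) :=
  ⟨⟨_, _, smul_sub_smul_one_mul_eq_one ht hrs hpq,
    smul_sub_smul_one_mul_eq_one ht (by rwa [add_comm]) (by rwa [mul_comm q, mul_comm s])⟩, rfl⟩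

theorem Ring.inverse_smul_sub_smul_one (ht : t * t = a • 1 + b • t) {p q r s : K}
    (hrs : r + s = b) (hpq : p * q * (a + r * s) = 1) :
    Ring.inverse (p • (t - r • 1)) = q • (t - s • 1) := by
  rw [← Ring.inverse_mul_cancel_left _ (q • (t - s • 1))
      (isUnit_smul_sub_smul_one ht hrs hpq),
    smul_sub_smul_one_mul_eq_one ht hrs hpq, mul_one]

theorem smul_sub_smul_one_mem_span (p r : K) : p • (t - r • 1) ∈ Submodule.span K {1, t} :=
  Submodule.smul_mem _ _ <| sub_mem (Submodule.subset_span (by simp))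
    (Submodule.smul_mem _ _ (Submodule.subset_span (by simp)))

end QuadraticElement

section Representation

variable {R A V : Type*} [CommSemiring R] [Semiring A] [Algebra R A] [AddCommMonoid V]
  [Module R V] (ρ : A →ₐ[R] Module.End R V)

theorem apply_ringInverse_apply {x : A} (hx : IsUnit x) (v : V) :
    ρ x (ρ (Ring.inverse x) v) = v := by
  rw [← Module.End.mul_apply, ← map_mul, Ring.mul_inverse_cancel _ hx, map_one,
    Module.End.one_apply]

theorem ringInverse_apply_apply {x : A} (hx : IsUnit x) (v : V) :
    ρ (Ring.inverse x) (ρ x v) = v := by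
  rw [← Module.End.mul_apply, ← map_mul, Ring.inverse_mul_cancel _ hx, map_one,
    Module.End.one_apply]

theorem apply_mem_span_pair {t x : A} (hx : x ∈ Submodule.span R {1, t}) (v : V) :
    ρ x v ∈ Submodule.span R {v, ρ t v} := by
  have := Submodule.apply_mem_span_image_of_mem_span ((LinearMap.applyₗ v).comp ρ.toLinearMap) hx
  simpa [Set.image_pair] using this

end Representation

theorem mul_self_eq_of_apply_eq_smul {K A V : Type*} [Field K] [Ring A] [Algebra K A]
    [AddCommGroup V] [Module K V] (ρ : A →ₐ[K] Module.End K V) {t : A} {a b e : K}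
    (ht : t * t = a • 1 + b • t)
    {v : V} (hv : v ≠ 0) (he : ρ t v = e • v) : e * e = a + b * e := by
  have h := congrArg (fun x => ρ x v) ht
  simp only [map_mul, Module.End.mul_apply, map_add, map_smul, map_one, LinearMap.add_apply,
    LinearMap.smul_apply, Module.End.one_apply, he] at h
  have h0 : (e * e - (a + b * e)) • v = 0 := by linear_combination (norm := module) h
  exact sub_eq_zero.1 ((smul_eq_zero.1 h0).resolve_right hv)

theorem LinearIndepOn.eq_of_mem_span_pair {K V : Type*} [DivisionRing K] [AddCommGroup V]
    [Module K V] {X : Set V} (hX : LinearIndepOn K id X) {a b c v : V} (ha : a ∈ X) (hb : b ∈ X)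
    (hc : c ∈ X) (hba : b ≠ a) (hca : c ≠ a) (hbv : b ∈ Submodule.span K {a, v})
    (hcv : c ∈ Submodule.span K {a, v}) : b = c := by
  classical
  by_contra hbc
  have hind : LinearIndepOn K id ((({a, b, c} : Finset V)) : Set V) :=
    hX.mono (by simp [Set.insert_subset_iff, ha, hb, hc])
  have hle : Submodule.span K (({a, b, c} : Finset V) : Set V)
      ≤ Submodule.span K (({a, v} : Finset V) : Set V) := by
    rw [Submodule.span_le]
    simpa [Set.insert_subset_iff, hbv, hcv] using
      Submodule.subset_span (R := K) (Set.mem_insert a {v})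
  have h3 := Submodule.finrank_mono hle
  rw [finrank_span_finset_eq_card hind,
    Finset.card_eq_three.2 ⟨a, b, c, hba.symm, hca.symm, hbc, rfl⟩] at h3
  have h2 := (finrank_span_finset_le_card (R := K) {a, v}).trans Finset.card_le_two
  exact absurd (h3.trans h2) (by norm_num)

theorem uu_ne_zero : uu ≠ 0 := RatFunc.X_ne_zero

theorem eval₂_uu_ne_zero {p : Polynomial ℚ} (hp : p ≠ 0) :
    Polynomial.eval₂ (algebraMap ℚ Kq) uu p ≠ 0 := by
  have h := (map_ne_zero_iff _ (RatFunc.algebraMap_injective ℚ)).2 hp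
  rwa [← Polynomial.eval₂_C_X (p := p), Polynomial.hom_eval₂, RatFunc.algebraMap_X,
    Subsingleton.elim ((algebraMap (Polynomial ℚ) Kq).comp Polynomial.C) (algebraMap ℚ Kq)] at h

open Polynomial in
theorem uu_add_one_ne_zero : uu + 1 ≠ 0 := by
  simpa using eval₂_uu_ne_zero (X_add_C_ne_zero (1 : ℚ))

open Polynomial in
theorem uu_sub_one_ne_zero : uu - 1 ≠ 0 := by
  simpa using eval₂_uu_ne_zero (X_sub_C_ne_zero (1 : ℚ))

open Polynomial in
theorem uu_sq_sub_two_mul_sub_one_ne_zero : uu ^ 2 - 2 * uu - 1 ≠ 0 := by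
  have hp : (X ^ 2 - 2 * X - 1 : ℚ[X]) ≠ 0 := fun h => by simpa using congrArg (eval 0) h
  simpa using eval₂_uu_ne_zero hp

namespace HeckeAlgebra

variable {cs : CoxeterSystem M W} (ha : HeckeAlgebra cs H) (i : B)

theorem T_simple_mul_self :
    ha.T (cs.simple i) * ha.T (cs.simple i)
      = (uu ^ 2) • 1 + (uu ^ 2 - 1) • ha.T (cs.simple i) := by
  have hlen : cs.length (cs.simple i * cs.simple i) < cs.length (cs.simple i) := by
    simp [cs.length_simple]
  simpa [ha.T_one] using ha.T_mul_of_gt i (cs.simple i) hlen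

theorem isUnit_T_simple : IsUnit (ha.T (cs.simple i)) := by
  simpa using isUnit_smul_sub_smul_one (ha.T_simple_mul_self i) (p := 1) (r := 0) (zero_add _)
    (q := (uu ^ 2)⁻¹) (by simp [uu_ne_zero])

theorem inverse_T_simple : Ring.inverse (ha.T (cs.simple i))
    = (uu ^ 2)⁻¹ • (ha.T (cs.simple i) - (uu ^ 2 - 1) • 1) := by
  simpa using Ring.inverse_smul_sub_smul_one (ha.T_simple_mul_self i) (p := 1) (r := 0)
    (zero_add _) (q := (uu ^ 2)⁻¹) (by simp [uu_ne_zero])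

theorem Tcirc_inverse_coeff :
    (uu + 1)⁻¹ * (uu ^ 2 - uu)⁻¹ * (uu ^ 2 + uu * (uu ^ 2 - uu - 1)) = 1 := by
  have h1 := uu_add_one_ne_zero
  have h2 : uu ^ 2 - uu ≠ 0 := by
    rw [sq, ← mul_sub_one]; exact mul_ne_zero uu_ne_zero uu_sub_one_ne_zero
  rw [show uu ^ 2 + uu * (uu ^ 2 - uu - 1) = (uu + 1) * (uu ^ 2 - uu) by ring, ← mul_inv,
    inv_mul_cancel₀ (mul_ne_zero h1 h2)]

theorem isUnit_Tcirc : IsUnit (Tcirc cs ha i) :=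
  isUnit_smul_sub_smul_one (ha.T_simple_mul_self i) (by ring) Tcirc_inverse_coeff

theorem inverse_Tcirc : Ring.inverse (Tcirc cs ha i)
    = (uu ^ 2 - uu)⁻¹ • (ha.T (cs.simple i) - (uu ^ 2 - uu - 1) • 1) :=
  Ring.inverse_smul_sub_smul_one (ha.T_simple_mul_self i) (by ring) Tcirc_inverse_coeff

def simpleMoves : Set H :=
  {ha.T (cs.simple i), Ring.inverse (ha.T (cs.simple i)), Tcirc cs ha i,
    Ring.inverse (Tcirc cs ha i)}

theorem simpleMoves_subset_span :
    ha.simpleMoves i ⊆ Submodule.span Kq {1, ha.T (cs.simple i)} := by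
  rintro h (rfl | rfl | rfl | rfl)
  · exact Submodule.subset_span (by simp)
  · rw [inverse_T_simple]; exact smul_sub_smul_one_mem_span _ _
  · exact smul_sub_smul_one_mem_span _ _
  · rw [inverse_Tcirc]; exact smul_sub_smul_one_mem_span _ _

variable {Mo : Type*} [AddCommGroup Mo] [Module Kq Mo] (ρ : H →ₐ[Kq] Module.End Kq Mo)

/- The eigenvalues of `T_s` are the roots `u²` and `-1` of `e² = u² + (u² - 1) e`; neither `1`
(for `T_s`) nor `2u + 1` (for `T_s°`) is among them. -/
theorem T_simple_apply_ne {v : Mo} (hv : v ≠ 0) : ρ (ha.T (cs.simple i)) v ≠ v := by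
  intro h
  have := mul_self_eq_of_apply_eq_smul ρ (ha.T_simple_mul_self i) hv (e := 1)
    (by rw [h, one_smul])
  exact mul_ne_zero uu_sub_one_ne_zero uu_add_one_ne_zero (by linear_combination -this / 2)

theorem Tcirc_apply_ne {v : Mo} (hv : v ≠ 0) : ρ (Tcirc cs ha i) v ≠ v := by
  intro h
  have hT : ρ (ha.T (cs.simple i)) v = (2 * uu + 1) • v := by
    rw [Tcirc, map_smul, LinearMap.smul_apply, inv_smul_eq_iff₀ uu_add_one_ne_zero] at h
    simp only [map_sub, map_smul, map_one, LinearMap.sub_apply, LinearMap.smul_apply,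
      Module.End.one_apply, sub_eq_iff_eq_add] at h
    rw [h, ← add_smul, two_mul, add_right_comm]
  have := mul_self_eq_of_apply_eq_smul ρ (ha.T_simple_mul_self i) hv hT
  exact mul_ne_zero uu_sq_sub_two_mul_sub_one_ne_zero uu_add_one_ne_zero
    (by linear_combination -this / 2)

theorem simpleMoves_apply_ne {h : H} (hh : h ∈ ha.simpleMoves i) {v : Mo} (hv : v ≠ 0) :
    ρ h v ≠ v := by
  rcases hh with rfl | rfl | rfl | rfl
  · exact ha.T_simple_apply_ne i ρ hv
  · refine fun h => ha.T_simple_apply_ne i ρ hv ?_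
    simpa only [h] using apply_ringInverse_apply ρ (ha.isUnit_T_simple i) v
  · exact ha.Tcirc_apply_ne i ρ hv
  · refine fun h => ha.Tcirc_apply_ne i ρ hv ?_
    simpa only [h] using apply_ringInverse_apply ρ (ha.isUnit_Tcirc i) v

theorem simpleMoves_apply_eq {X : Set Mo} (hX : LinearIndepOn Kq id X) {x : Mo} (hx : x ∈ X)
    {h h' : H} (hh : h ∈ ha.simpleMoves i) (hh' : h' ∈ ha.simpleMoves i) (hy : ρ h x ∈ X)
    (hy' : ρ h' x ∈ X) : ρ h x = ρ h' x :=
  have hx0 : x ≠ 0 := hX.ne_zero hx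
  hX.eq_of_mem_span_pair hx hy hy' (ha.simpleMoves_apply_ne i ρ hh hx0)
    (ha.simpleMoves_apply_ne i ρ hh' hx0)
    (apply_mem_span_pair ρ (ha.simpleMoves_subset_span i hh) x)
    (apply_mem_span_pair ρ (ha.simpleMoves_subset_span i hh') x)

theorem exists_simpleMoves_apply_mem_iff {X : Set Mo} {α : Mo} :
    (∃ h ∈ ha.simpleMoves i, ρ h α ∈ X) ↔
      ρ (ha.T (cs.simple i)) α ∈ X ∨ ρ (Ring.inverse (ha.T (cs.simple i))) α ∈ X ∨
        ρ (Tcirc cs ha i) α ∈ X ∨ ρ (Ring.inverse (Tcirc cs ha i)) α ∈ X := by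
  simp [simpleMoves]

def pairBlocks (X : Set Mo) : Set (Set Mo) :=
  {U | ∃ α ∈ X, ∃ β ∈ X, α ≠ β ∧ U = {α, β} ∧
    (ρ (ha.T (cs.simple i)) α = β ∨ ρ (Tcirc cs ha i) α = β)}

theorem exists_simpleMoves_pair_eq {α β x : Mo}
    (hαβ : ρ (ha.T (cs.simple i)) α = β ∨ ρ (Tcirc cs ha i) α = β)
    (hx : x ∈ ({α, β} : Set Mo)) :
    ∃ h ∈ ha.simpleMoves i, ({α, β} : Set Mo) = {x, ρ h x} := by
  rcases hx with rfl | rfl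
  · rcases hαβ with rfl | rfl
    · exact ⟨_, Set.mem_insert _ _, rfl⟩
    · exact ⟨Tcirc cs ha i, by simp [simpleMoves], rfl⟩
  · rcases hαβ with rfl | rfl
    · refine ⟨Ring.inverse (ha.T (cs.simple i)), by simp [simpleMoves], ?_⟩
      rw [ringInverse_apply_apply ρ (ha.isUnit_T_simple i), Set.pair_comm]
    · refine ⟨Ring.inverse (Tcirc cs ha i), by simp [simpleMoves], ?_⟩
      rw [ringInverse_apply_apply ρ (ha.isUnit_Tcirc i), Set.pair_comm]

theorem pair_mem_pairBlocks {X : Set Mo} (hX : LinearIndepOn Kq id X) {h : H}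
    (hh : h ∈ ha.simpleMoves i) {x : Mo} (hx : x ∈ X) (hy : ρ h x ∈ X) :
    {x, ρ h x} ∈ ha.pairBlocks i ρ X := by
  have hne : x ≠ ρ h x := (ha.simpleMoves_apply_ne i ρ hh (hX.ne_zero hx)).symm
  rcases hh with rfl | rfl | rfl | rfl
  · exact ⟨x, hx, _, hy, hne, rfl, Or.inl rfl⟩
  · exact ⟨_, hy, x, hx, hne.symm, Set.pair_comm _ _,
      Or.inl (apply_ringInverse_apply ρ (ha.isUnit_T_simple i) x)⟩
  · exact ⟨x, hx, _, hy, hne, rfl, Or.inr rfl⟩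
  · exact ⟨_, hy, x, hx, hne.symm, Set.pair_comm _ _,
      Or.inr (apply_ringInverse_apply ρ (ha.isUnit_Tcirc i) x)⟩

theorem sUnion_pairBlocks {X : Set Mo} (hX : LinearIndepOn Kq id X)
    (hmoves : ∀ x ∈ X, ∃ h ∈ ha.simpleMoves i, ρ h x ∈ X) :
    ⋃₀ ha.pairBlocks i ρ X = X := by
  refine subset_antisymm ?_ fun x hx => ?_
  · rintro x ⟨U, ⟨α, hα, β, hβ, -, rfl, -⟩, hxU⟩
    rcases hxU with rfl | rfl
    exacts [hα, hβ]
  · obtain ⟨h, hh, hy⟩ := hmoves x hx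
    exact ⟨_, ha.pair_mem_pairBlocks i ρ hX hh hx hy, Set.mem_insert x _⟩

theorem pairBlocks_pairwiseDisjoint {X : Set Mo} (hX : LinearIndepOn Kq id X) :
    (ha.pairBlocks i ρ X).PairwiseDisjoint id := by
  rintro U ⟨α, hα, β, hβ, -, rfl, hαβ⟩ U' ⟨α', hα', β', hβ', -, rfl, hαβ'⟩ hne
  refine Set.disjoint_left.2 fun x hxU hxU' => hne ?_
  obtain ⟨h, hh, hU⟩ := ha.exists_simpleMoves_pair_eq i ρ hαβ hxU
  obtain ⟨h', hh', hU'⟩ := ha.exists_simpleMoves_pair_eq i ρ hαβ' hxU'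
  have hx : x ∈ X := Set.pair_subset hα hβ hxU
  have hy : ρ h x ∈ X := Set.pair_subset hα hβ (hU ▸ Set.mem_insert_of_mem _ rfl)
  have hy' : ρ h' x ∈ X := Set.pair_subset hα' hβ' (hU' ▸ Set.mem_insert_of_mem _ rfl)
  rw [hU, hU', ha.simpleMoves_apply_eq i ρ hX hx hh hh' hy hy']

end HeckeAlgebra

/-- Lemma `partitions`.  A linearly independent subset `X`
of an `H`-module supports a `W`-digraph if and only if for each `s ∈ S` there
is a partition of `X` into blocks of the form `{α, β}` with `α ≠ β` and
`T_s α = β` or `T_s° α = β`. -/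
theorem supports_wdigraph_iff_partitions {Mo : Type*}
    [AddCommGroup Mo] [Module Kq Mo]
    (cs : CoxeterSystem M W) (ha : HeckeAlgebra cs H)
    (ρ : H →ₐ[Kq] Module.End Kq Mo) (X : Set Mo)
    (hX : LinearIndependent Kq (fun x : X => (x : Mo))) :
    SupportsWDigraph cs ha ρ X ↔
      ∀ i : B, ∃ P : Set (Set Mo),
        ⋃₀ P = X ∧
        (∀ U ∈ P, ∀ U' ∈ P, U ≠ U' → Disjoint U U') ∧
        (∀ U ∈ P, ∃ α β : Mo, α ≠ β ∧ U = {α, β} ∧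
          (ρ (ha.T (cs.simple i)) α = β ∨ ρ (Tcirc cs ha i) α = β)) := by
  simp only [SupportsWDigraph, ← ha.exists_simpleMoves_apply_mem_iff, hX, true_and]
  refine ⟨fun hmoves i => ?_, fun hP α hα i => ?_⟩
  · refine ⟨ha.pairBlocks i ρ X, ha.sUnion_pairBlocks i ρ hX fun x hx => hmoves x hx i,
      ha.pairBlocks_pairwiseDisjoint i ρ hX, ?_⟩
    rintro U ⟨α, -, β, -, hne, rfl, hαβ⟩
    exact ⟨α, β, hne, rfl, hαβ⟩
  · obtain ⟨P, hcover, -, hblocks⟩ := hP i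
    obtain ⟨U, hU, hαU⟩ := hcover.symm ▸ hα
    obtain ⟨a, b, -, rfl, hab⟩ := hblocks U hU
    obtain ⟨h, hh, hUeq⟩ := ha.exists_simpleMoves_pair_eq i ρ hab hαU
    refine ⟨h, hh, hcover ▸ ⟨_, hU, ?_⟩⟩
    rw [hUeq]
    exact Set.mem_insert_of_mem _ rfl
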